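/- arXiv:1702.02129 — 3 statements merged into one kernel-verified Lean document; each statement's English description precedes it below -/
import Mathlib

section
/- Let α > 0 and μ, σ, k, l be real numbers, let b and c satisfy |b(x,ζ,ξ)| ≤ b₀ (1+|x|)^k |ζ|^μ |ξ|^α (b₀ > 0) and c(x) ≥ c₀ (1+|x|)^l (c₀ > 0) for all x ∈ ℝⁿ, ζ ∈ ℝ∖{0}, ξ ∈ ℝⁿ, and set f(x,ζ,ξ) = c(x)|ζ|^{σ−1}ζ − b(x,ζ,ξ), g(ζ) = ζ^σ, h(ζ) = ζ^{(σ−μ)/α}. Then there exists a sufficiently small real number p₀ > 0 such that, with p(x) = p₀ (1+|x|)^{min{(l−k)/α − 1, l}}, the inequality f(x,ζ,λx)·sign ζ ≥ p(x) g(|ζ|) (1 + Σ_{i,j=1}^n |δ_{ij}|) holds for all x ∈ ℝⁿ, ζ ∈ ℝ∖{0}, and 0 ≤ λ ≤ p(x) h(|ζ|), where δ_{ij} is the Kronecker delta (the coefficients a_{ij} of the Laplacian). -/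
open Set Filter Metric

noncomputable section

/-- `n`-dimensional Euclidean space. -/
abbrev Eucl (n : ℕ) := EuclideanSpace ℝ (Fin n)

set_option maxHeartbeats 1000000 in
/-- Verification of the structural condition (1.2) in **Example 2.1**: with
`f(x,ζ,ξ) = c(x)|ζ|^{σ−1}ζ − b(x,ζ,ξ)`, `g(ζ) = ζ^σ`, `h(ζ) = ζ^{(σ−μ)/α}`, there is a
sufficiently small `p₀ > 0` so that, with `p(x) = p₀(1+|x|)^{min{(l−k)/α − 1, l}}`,
one has `f(x,ζ,λx)·sign ζ ≥ p(x) g(|ζ|) (1 + Σ_{i,j}|δᵢⱼ|)` (where `Σ_{i,j}|δᵢⱼ| = n`)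
for all `x ∈ ℝⁿ`, `ζ ≠ 0`, `0 ≤ λ ≤ p(x) h(|ζ|)`. -/
theorem example_2_1_structural_condition
    (n : ℕ) (hn : 1 ≤ n)
    (b : Eucl n → ℝ → Eucl n → ℝ) (c : Eucl n → ℝ)
    (b₀ c₀ α μ σ k l : ℝ)
    (hb₀ : 0 < b₀) (hc₀ : 0 < c₀) (hα : 0 < α)
    (hb : ∀ (x : Eucl n) (ζ : ℝ) (ξ : Eucl n), ζ ≠ 0 →
      |b x ζ ξ| ≤ b₀ * (1 + ‖x‖) ^ k * |ζ| ^ μ * ‖ξ‖ ^ α)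
    (hc : ∀ x : Eucl n, c₀ * (1 + ‖x‖) ^ l ≤ c x) :
    ∃ p₀ : ℝ, 0 < p₀ ∧
      ∀ (x : Eucl n) (ζ lam : ℝ), ζ ≠ 0 → 0 ≤ lam →
        lam ≤ p₀ * (1 + ‖x‖) ^ min ((l - k) / α - 1) l * |ζ| ^ ((σ - μ) / α) →
        p₀ * (1 + ‖x‖) ^ min ((l - k) / α - 1) l * |ζ| ^ σ * (1 + (n : ℝ)) ≤
          (c x * |ζ| ^ (σ - 1) * ζ - b x ζ (lam • x)) * Real.sign ζ := by
  have hn1 : (0:ℝ) < 1 + (n:ℝ) := by positivity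
  have hcb : (0:ℝ) < c₀ / (2 * b₀) := by positivity
  set pa : ℝ := (c₀ / (2 * b₀)) ^ (1/α : ℝ) with hpa
  have hpa0 : 0 < pa := Real.rpow_pos_of_pos hcb _
  refine ⟨min 1 (min (c₀ / (2 * (1 + (n:ℝ)))) pa), ?_, ?_⟩
  · have : (0:ℝ) < c₀ / (2 * (1 + (n:ℝ))) := by positivity
    positivity
  intro x ζ lam hζ hlam hle
  set p₀ : ℝ := min 1 (min (c₀ / (2 * (1 + (n:ℝ)))) pa) with hp₀def
  have hp₀ : 0 < p₀ := by
    have : (0:ℝ) < c₀ / (2 * (1 + (n:ℝ))) := by positivity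
    positivity
  have hp2 : p₀ ≤ c₀ / (2 * (1 + (n:ℝ))) := le_trans (min_le_right _ _) (min_le_left _ _)
  have hp3 : p₀ ≤ pa := le_trans (min_le_right _ _) (min_le_right _ _)
  set m : ℝ := min ((l - k) / α - 1) l with hmdef
  set A : ℝ := 1 + ‖x‖ with hAdef
  have hA : (1:ℝ) ≤ A := by rw [hAdef]; linarith [norm_nonneg x]
  have hA0 : (0:ℝ) < A := lt_of_lt_of_le one_pos hA
  set Z : ℝ := |ζ| with hZdef
  have hZ : 0 < Z := abs_pos.mpr hζ
  -- p₀ ^ α ≤ c₀ / (2 b₀)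
  have hpα : p₀ ^ (α:ℝ) ≤ c₀ / (2 * b₀) := by
    calc p₀ ^ (α:ℝ) ≤ pa ^ (α:ℝ) := Real.rpow_le_rpow hp₀.le hp3 hα.le
    _ = c₀ / (2 * b₀) := by
        rw [hpa, ← Real.rpow_mul hcb.le, one_div, inv_mul_cancel₀ hα.ne', Real.rpow_one]
  -- exponent inequalities
  have hm1 : m ≤ l := min_le_right _ _
  have hm2 : k + α * m + α ≤ l := by
    have h1 : m ≤ (l - k) / α - 1 := min_le_left _ _
    have h2 : α * m ≤ α * ((l - k) / α - 1) := mul_le_mul_of_nonneg_left h1 hα.le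
    have h3 : α * ((l - k) / α - 1) = l - k - α := by field_simp
    linarith
  -- sign facts
  have hsign : ζ * Real.sign ζ = Z := by
    rcases hζ.lt_or_gt with h | h
    · rw [Real.sign_of_neg h, hZdef, abs_of_neg h]; ring
    · rw [Real.sign_of_pos h, hZdef, abs_of_pos h]; ring
  have hsignabs : |Real.sign ζ| = 1 := by
    rcases hζ.lt_or_gt with h | h
    · rw [Real.sign_of_neg h]; simp
    · rw [Real.sign_of_pos h]; simp
  have hZσ : Z ^ (σ - 1 : ℝ) * Z = Z ^ (σ:ℝ) := by
    rw [Real.rpow_sub_one hZ.ne']; field_simp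
  -- bound on the b-term
  set B : ℝ := b x ζ (lam • x) with hBdef
  have hBabs : |B| ≤ b₀ * A ^ (k:ℝ) * Z ^ (μ:ℝ) * ‖lam • x‖ ^ (α:ℝ) := hb x ζ _ hζ
  have hnormle : ‖lam • x‖ ^ (α:ℝ) ≤ lam ^ (α:ℝ) * A ^ (α:ℝ) := by
    have h1 : ‖lam • x‖ ≤ lam * A := by
      rw [norm_smul, Real.norm_eq_abs, abs_of_nonneg hlam]
      have := norm_nonneg x
      nlinarith
    calc ‖lam • x‖ ^ (α:ℝ) ≤ (lam * A) ^ (α:ℝ) :=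
          Real.rpow_le_rpow (norm_nonneg _) h1 hα.le
    _ = lam ^ (α:ℝ) * A ^ (α:ℝ) := Real.mul_rpow hlam hA0.le
  have hlamα : lam ^ (α:ℝ) ≤ p₀ ^ (α:ℝ) * A ^ (m * α) * Z ^ (σ - μ) := by
    have h1 : lam ^ (α:ℝ) ≤ (p₀ * A ^ m * Z ^ ((σ - μ)/α)) ^ (α:ℝ) :=
      Real.rpow_le_rpow hlam hle hα.le
    have h2 : (p₀ * A ^ m * Z ^ ((σ - μ)/α)) ^ (α:ℝ)
        = p₀ ^ (α:ℝ) * A ^ (m * α) * Z ^ (σ - μ) := by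
      rw [Real.mul_rpow (by positivity) (by positivity),
          Real.mul_rpow hp₀.le (by positivity),
          ← Real.rpow_mul hA0.le, ← Real.rpow_mul hZ.le, div_mul_cancel₀ _ hα.ne']
    linarith [h2 ▸ h1]
  -- combine bound on |B|
  have hBfinal : |B| ≤ (c₀ / 2) * A ^ (l:ℝ) * Z ^ (σ:ℝ) := by
    have h1 : b₀ * A ^ (k:ℝ) * Z ^ (μ:ℝ) * ‖lam • x‖ ^ (α:ℝ)
        ≤ b₀ * A ^ (k:ℝ) * Z ^ (μ:ℝ) * (p₀ ^ (α:ℝ) * A ^ (m * α) * Z ^ (σ - μ) * A ^ (α:ℝ)) := by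
      have hle2 : ‖lam • x‖ ^ (α:ℝ) ≤ p₀ ^ (α:ℝ) * A ^ (m * α) * Z ^ (σ - μ) * A ^ (α:ℝ) := by
        calc ‖lam • x‖ ^ (α:ℝ) ≤ lam ^ (α:ℝ) * A ^ (α:ℝ) := hnormle
        _ ≤ p₀ ^ (α:ℝ) * A ^ (m * α) * Z ^ (σ - μ) * A ^ (α:ℝ) := by
            apply mul_le_mul_of_nonneg_right hlamα (by positivity)
      apply mul_le_mul_of_nonneg_left hle2 (by positivity)
    have h2 : b₀ * A ^ (k:ℝ) * Z ^ (μ:ℝ) * (p₀ ^ (α:ℝ) * A ^ (m * α) * Z ^ (σ - μ) * A ^ (α:ℝ))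
        = (b₀ * p₀ ^ (α:ℝ)) * A ^ (k + α * m + α) * Z ^ (σ:ℝ) := by
      rw [show k + α * m + α = k + (m * α + α) by ring, Real.rpow_add hA0,
          Real.rpow_add hA0, show (σ:ℝ) = μ + (σ - μ) by ring, Real.rpow_add hZ]
      ring
    have h3 : (b₀ * p₀ ^ (α:ℝ)) * A ^ (k + α * m + α) * Z ^ (σ:ℝ)
        ≤ (c₀ / 2) * A ^ (l:ℝ) * Z ^ (σ:ℝ) := by
      have hA' : A ^ (k + α * m + α) ≤ A ^ (l:ℝ) :=
        Real.rpow_le_rpow_of_exponent_le hA hm2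
      have hb' : b₀ * p₀ ^ (α:ℝ) ≤ c₀ / 2 := by
        calc b₀ * p₀ ^ (α:ℝ) ≤ b₀ * (c₀ / (2 * b₀)) :=
              mul_le_mul_of_nonneg_left hpα hb₀.le
        _ = c₀ / 2 := by field_simp
      have hApos : (0:ℝ) ≤ A ^ (k + α * m + α) := by positivity
      have hZpos : (0:ℝ) ≤ Z ^ (σ:ℝ) := by positivity
      have hbpos : (0:ℝ) ≤ b₀ * p₀ ^ (α:ℝ) := by positivity
      have := mul_le_mul hb' hA' hApos (by linarith [hc₀] : (0:ℝ) ≤ c₀/2)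
      exact mul_le_mul_of_nonneg_right this hZpos
    calc |B| ≤ _ := hBabs
    _ ≤ _ := h1
    _ = _ := h2
    _ ≤ _ := h3
  -- bound on the left-hand side
  have hLHS : p₀ * A ^ m * Z ^ (σ:ℝ) * (1 + (n:ℝ)) ≤ (c₀ / 2) * A ^ (l:ℝ) * Z ^ (σ:ℝ) := by
    have hA' : A ^ m ≤ A ^ (l:ℝ) := Real.rpow_le_rpow_of_exponent_le hA hm1
    have hp' : p₀ * (1 + (n:ℝ)) ≤ c₀ / 2 := by
      have := mul_le_mul_of_nonneg_right hp2 hn1.le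
      calc p₀ * (1 + (n:ℝ)) ≤ c₀ / (2 * (1 + (n:ℝ))) * (1 + (n:ℝ)) := this
      _ = c₀ / 2 := by field_simp
    have hZpos : (0:ℝ) ≤ Z ^ (σ:ℝ) := by positivity
    have hApos : (0:ℝ) ≤ A ^ m := by positivity
    have h := mul_le_mul hp' hA' hApos (by linarith [hc₀] : (0:ℝ) ≤ c₀/2)
    calc p₀ * A ^ m * Z ^ (σ:ℝ) * (1 + (n:ℝ)) = (p₀ * (1 + (n:ℝ))) * A ^ m * Z ^ (σ:ℝ) := by ring
    _ ≤ (c₀ / 2) * A ^ (l:ℝ) * Z ^ (σ:ℝ) := mul_le_mul_of_nonneg_right h hZpos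
  -- expand the right-hand side
  have hrhs : (c x * Z ^ (σ - 1 : ℝ) * ζ - B) * Real.sign ζ
      = c x * Z ^ (σ:ℝ) - B * Real.sign ζ := by
    have : c x * Z ^ (σ - 1 : ℝ) * ζ * Real.sign ζ = c x * (Z ^ (σ - 1 : ℝ) * (ζ * Real.sign ζ)) := by
      ring
    rw [sub_mul, this, hsign, hZσ]
  have hBsign : B * Real.sign ζ ≤ (c₀ / 2) * A ^ (l:ℝ) * Z ^ (σ:ℝ) := by
    calc B * Real.sign ζ ≤ |B * Real.sign ζ| := le_abs_self _
    _ = |B| := by rw [abs_mul, hsignabs, mul_one]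
    _ ≤ _ := hBfinal
  have hcx : c₀ * A ^ (l:ℝ) * Z ^ (σ:ℝ) ≤ c x * Z ^ (σ:ℝ) := by
    have hZpos : (0:ℝ) ≤ Z ^ (σ:ℝ) := by positivity
    exact mul_le_mul_of_nonneg_right (hc x) hZpos
  rw [hrhs]
  linarith [hLHS, hBsign, hcx]
end
end

section
/- Let a_{ij} : ℝⁿ × ℝ → ℝ satisfy Σ_{i,j=1}^n a_{ij}(x,ζ) ξ_i ξ_j > 0 for all x ∈ ℝⁿ, ζ ∈ ℝ∖{0}, ξ ∈ ℝⁿ∖{0}, let f : ℝⁿ × ℝ × ℝⁿ → ℝ be arbitrary, and let ω ≠ ∅ be a bounded open subset of ℝⁿ × (0,∞) such that a given continuous function u is strictly positive on ω ∪ γ(ω). Write L = Σ_{i,j=1}^n a_{ij}(x, u(x,t)) ∂²/∂x_i∂x_j. Suppose v and w are continuous on the closure of ω, have two continuous x-derivatives and one continuous t-derivative on ω ∪ γ(ω), and satisfy L v − v_t − f(x, u, Dv) ≥ L w − w_t − f(x, u, Dw) on ω ∪ γ(ω) and v ≤ w on the proper boundary Γ(ω). Then v ≤ w on ω ∪ γ(ω).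 -/
open Set Filter Metric

noncomputable section

/-- The upper lid `γ(Ω)` of a set `Ω ⊆ ℝⁿ × ℝ`: points `(x,t)` for which there are
`r > 0` and `ε > 0` with `B_r(x) × (t−ε, t) ⊆ Ω` and `(B_r(x) × (t, t+ε)) ∩ Ω = ∅`. -/
def upperLid {n : ℕ} (Ω : Set (Eucl n × ℝ)) : Set (Eucl n × ℝ) :=
  {q | ∃ r > (0 : ℝ), ∃ ε > (0 : ℝ),
    (ball q.1 r ×ˢ Ioo (q.2 - ε) q.2) ⊆ Ω ∧
    (ball q.1 r ×ˢ Ioo q.2 (q.2 + ε)) ∩ Ω = ∅}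

/-- The proper (parabolic) boundary `Γ(Ω) = ∂Ω ∖ γ(Ω)`. -/
def properBoundary {n : ℕ} (Ω : Set (Eucl n × ℝ)) : Set (Eucl n × ℝ) :=
  frontier Ω \ upperLid Ω

open Topology

/-! Fix `σ > 0`. The function `v − w − σ t` attains its maximum over the compact set `closure ω`,
but not at a point `p ∈ ω ∪ γ(ω)`: there `ω` contains a backward cylinder below `p` and the time
slice through `p` stays in `ω ∪ γ(ω)`, so `p` is a spatial local maximum (`Dv = Dw`, and the
Hessian of `v − w` is symmetric and negative semidefinite, whence `L (v − w) ≤ 0` by ellipticity)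
and a maximum from the past in time (`v_t − w_t ≥ σ > 0`), which contradicts the differential
inequality. Hence the maximum is attained on `Γ(ω)`, where `v ≤ w`, so `v − w ≤ σ C` on
`closure ω` with `C` depending only on the bounded set `ω`; letting `σ → 0` gives `v ≤ w`. -/

section

variable {E F : Type*} [NormedAddCommGroup E] [NormedSpace ℝ E]
  [NormedAddCommGroup F] [NormedSpace ℝ F]

theorem Convex.norm_sub_sub_smul_le_of_hasLineDerivAt {S : Set E} (hS : Convex ℝ S)
    {g : E → F} {e : E} {p : E → F} {P : F} {ε : ℝ} (hd : ∀ z ∈ S, HasLineDerivAt ℝ g (p z) z e)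
    (hp : ∀ z ∈ S, ‖p z - P‖ ≤ ε) {y : E} {t : ℝ} (hy : y ∈ S) (hyt : y + t • e ∈ S) :
    ‖g (y + t • e) - g y - t • P‖ ≤ ε * |t| := by
  have hseg : ∀ s ∈ Icc (0 : ℝ) 1, y + (s * t) • e ∈ S := fun s hs => by
    simpa [mul_smul] using hS.add_smul_mem hy (by simpa using hyt) hs
  have hderiv : ∀ s ∈ Icc (0 : ℝ) 1, HasDerivAt (fun σ : ℝ => g (y + (σ * t) • e) - (σ * t) • P)
      (t • p (y + (s * t) • e) - t • P) s := by
    intro s hs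
    have hz : HasDerivAt (fun σ : ℝ => g (y + (s * t) • e + σ • e)) _ 0 := hd _ (hseg s hs)
    have hline := HasDerivAt.scomp (x := 0) (by simpa using hz) (hasDerivAt_mul_const t)
    have hshift := HasDerivAt.comp_sub_const (x := s) (a := s) (by simpa using hline)
    refine HasDerivAt.sub ?_ (by simpa using (hasDerivAt_mul_const t).smul_const P)
    convert hshift using 2 with σ
    simp only [Function.comp, add_assoc, ← add_smul]
    ring_nf
  have hbound : ∀ s ∈ Ico (0 : ℝ) 1, ‖t • p (y + (s * t) • e) - t • P‖ ≤ ε * |t| := by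
    intro s hs
    rw [← smul_sub, norm_smul, Real.norm_eq_abs, mul_comm]
    exact mul_le_mul_of_nonneg_right (hp _ (hseg s (Ico_subset_Icc_self hs))) (abs_nonneg t)
  simpa [sub_right_comm] using norm_image_sub_le_of_norm_deriv_le_segment_01'
    (fun s hs => (hderiv s hs).hasDerivWithinAt) hbound

theorem IsLocalMax.nonpos_of_hasDerivAt_deriv {f f' : ℝ → ℝ} {x c : ℝ} (h : IsLocalMax f x)
    (hf : ∀ᶠ y in 𝓝 x, HasDerivAt f (f' y) y) (hf' : HasDerivAt f' c x) : c ≤ 0 := by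
  -- for `c > 0` the second derivative test makes `x` a local minimum too, so `f` is locally
  -- constant and `c = 0`
  by_contra! hc
  have hderiv : deriv f =ᶠ[𝓝 x] f' := hf.mono fun y hy => hy.deriv
  have hmin : IsLocalMin f x := isLocalMin_of_deriv_deriv_pos
    (by rw [(hf'.congr_of_eventuallyEq hderiv).deriv]; exact hc)
    (by rw [hderiv.eq_of_nhds]; exact h.hasDerivAt_eq_zero hf.self_of_nhds)
    hf.self_of_nhds.continuousAt
  have hconst : f =ᶠ[𝓝 x] fun _ => f x := by
    filter_upwards [h, hmin] with y hmax hmin using le_antisymm hmax hmin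
  have hzero : f' =ᶠ[𝓝 x] fun _ => 0 := by
    filter_upwards [hconst.eventuallyEq_nhds, hf] with y hy hfy
    exact hfy.unique ((hasDerivAt_const y (f x)).congr_of_eventuallyEq hy)
  exact hc.ne' (hf'.unique ((hasDerivAt_const x 0).congr_of_eventuallyEq hzero))

theorem IsLocalMax.hessian_nonpos {G : E → ℝ} {G' : E → E →L[ℝ] ℝ}
    {G'' : E →L[ℝ] E →L[ℝ] ℝ} {x : E} (h : IsLocalMax G x)
    (hG : ∀ᶠ y in 𝓝 x, HasFDerivAt G (G' y) y) (hG' : HasFDerivAt G' G'' x) (v : E) :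
    G'' v v ≤ 0 := by
  have hline : ∀ s : ℝ, HasDerivAt (fun σ : ℝ => x + σ • v) v s := fun s => by
    simpa using ((hasDerivAt_id s).smul_const v).const_add x
  have hline0 : Tendsto (fun σ : ℝ => x + σ • v) (𝓝 0) (𝓝 x) := by
    simpa using (hline 0).continuousAt.tendsto
  refine IsLocalMax.nonpos_of_hasDerivAt_deriv (f := fun σ => G (x + σ • v))
    (f' := fun σ => G' (x + σ • v) v)
    (IsLocalMax.comp_continuous (g := fun σ : ℝ => x + σ • v) (by simpa using h)
      (hline 0).continuousAt) ?_ ?_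
  · filter_upwards [hline0 hG] with s hs
    exact HasFDerivAt.comp_hasDerivAt s (show HasFDerivAt G _ _ from hs) (hline s)
  · have := (hG'.comp_hasDerivAt_of_eq 0 (hline 0) (by simp)).clm_apply (hasDerivAt_const 0 v)
    simpa using this

theorem IsLocalMaxOn.nonneg_of_hasDerivAt_Iic {f : ℝ → ℝ} {t f' : ℝ}
    (h : IsLocalMaxOn f (Iic t) t) (hf : HasDerivAt f f' t) : 0 ≤ f' := by
  have hseg : segment ℝ t (t + -1) ⊆ Iic t := by
    rw [segment_eq_Icc']
    exact fun τ hτ => hτ.2.trans (max_le le_rfl (by linarith))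
  simpa using h.hasFDerivWithinAt_nonpos hf.hasFDerivAt.hasFDerivWithinAt
    (mem_posTangentConeAt_of_segment_subset hseg)

end

section

variable {ι : Type*} [Fintype ι]

theorem Matrix.PosSemidef.sum_mul_nonneg {A N : Matrix ι ι ℝ} (hN : N.PosSemidef)
    (hA : ∀ ξ : ι → ℝ, 0 ≤ ∑ i, ∑ j, A i j * ξ i * ξ j) :
    0 ≤ ∑ i, ∑ j, A i j * N i j := by
  obtain ⟨m, v, rfl⟩ := Matrix.posSemidef_iff_eq_sum_vecMulVec.mp hN
  have : ∑ i, ∑ j, A i j * (∑ k, Matrix.vecMulVec (v k) (star (v k))) i j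
      = ∑ k, ∑ i, ∑ j, A i j * v k i * v k j := by
    simp only [Matrix.sum_apply, Matrix.vecMulVec_apply, star_trivial, Finset.mul_sum, mul_assoc]
    exact (Finset.sum_congr rfl fun i _ => Finset.sum_comm).trans Finset.sum_comm
  rw [this]
  exact Finset.sum_nonneg fun k _ => hA (v k)

theorem sum_mul_nonpos_of_quadForm_nonpos {A M : ι → ι → ℝ}
    (hA : ∀ ξ : ι → ℝ, 0 ≤ ∑ i, ∑ j, A i j * ξ i * ξ j)
    (hM : ∀ ξ : ι → ℝ, ∑ i, ∑ j, M i j * ξ i * ξ j ≤ 0) (hMsymm : ∀ i j, M i j = M j i) :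
    ∑ i, ∑ j, A i j * M i j ≤ 0 := by
  have hN : (Matrix.of fun i j => -M i j).PosSemidef := by
    refine .of_dotProduct_mulVec_nonneg (Matrix.IsHermitian.ext fun i j => ?_) fun ξ => ?_
    · simp [hMsymm i j]
    · have hξ : star ξ ⬝ᵥ Matrix.mulVec (Matrix.of fun i j => -M i j) ξ =
          -∑ i, ∑ j, M i j * ξ i * ξ j := by
        simp only [dotProduct, Matrix.mulVec, Matrix.of_apply, star_trivial, Finset.mul_sum,
          ← Finset.sum_neg_distrib]
        exact Finset.sum_congr rfl fun i _ => Finset.sum_congr rfl fun j _ => by ring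
      linarith [hM ξ]
  simpa using hN.sum_mul_nonneg hA

end

section

variable {ι F : Type*} [Fintype ι] [NormedAddCommGroup F] [NormedSpace ℝ F]

theorem EuclideanSpace.sum_norm_apply_le (h : EuclideanSpace ℝ ι) :
    ∑ i, ‖h i‖ ≤ Fintype.card ι * ‖h‖ :=
  (Finset.sum_le_sum fun i _ => PiLp.norm_apply_le h i).trans_eq (by simp)

variable [DecidableEq ι]

theorem EuclideanSpace.sum_smul_single (h : EuclideanSpace ℝ ι) :
    ∑ i, h i • EuclideanSpace.single i (1 : ℝ) = h := by
  simpa using (EuclideanSpace.basisFun ι ℝ).sum_repr h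

theorem EuclideanSpace.norm_sum_smul_single_le (h : EuclideanSpace ℝ ι) (s : Finset ι) :
    ‖∑ i ∈ s, h i • EuclideanSpace.single i (1 : ℝ)‖ ≤ Fintype.card ι * ‖h‖ :=
  calc ‖∑ i ∈ s, h i • EuclideanSpace.single i (1 : ℝ)‖ ≤ ∑ i ∈ s, ‖h i‖ :=
        (norm_sum_le _ _).trans_eq (by simp [norm_smul])
    _ ≤ ∑ i, ‖h i‖ := Finset.sum_le_sum_of_subset_of_nonneg s.subset_univ (by simp)
    _ ≤ Fintype.card ι * ‖h‖ := EuclideanSpace.sum_norm_apply_le h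

theorem Convex.norm_sub_sub_sum_le_of_hasLineDerivAt_single {S : Set (EuclideanSpace ℝ ι)}
    (hS : Convex ℝ S) {g : EuclideanSpace ℝ ι → F} {p : ι → EuclideanSpace ℝ ι → F}
    {x₀ h : EuclideanSpace ℝ ι} {ε : ℝ}
    (hd : ∀ z ∈ S, ∀ i, HasLineDerivAt ℝ g (p i z) z (EuclideanSpace.single i 1))
    (hp : ∀ z ∈ S, ∀ i, ‖p i z - p i x₀‖ ≤ ε)
    (hmem : ∀ s : Finset ι, x₀ + ∑ i ∈ s, h i • EuclideanSpace.single i (1 : ℝ) ∈ S)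
    (s : Finset ι) :
    ‖g (x₀ + ∑ i ∈ s, h i • EuclideanSpace.single i (1 : ℝ)) - g x₀ - ∑ i ∈ s, h i • p i x₀‖
      ≤ ε * ∑ i ∈ s, ‖h i‖ := by
  induction s using Finset.induction_on with
  | empty => simp
  | insert i s hi ih =>
    have hins : x₀ + ∑ j ∈ insert i s, h j • EuclideanSpace.single j (1 : ℝ)
        = x₀ + ∑ j ∈ s, h j • EuclideanSpace.single j (1 : ℝ)
          + h i • EuclideanSpace.single i 1 := by
      rw [Finset.sum_insert hi]; abel
    set y := x₀ + ∑ j ∈ s, h j • EuclideanSpace.single j (1 : ℝ)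
    have hstep := hS.norm_sub_sub_smul_le_of_hasLineDerivAt (fun z hz => hd z hz i)
      (fun z hz => hp z hz i) (hmem s) (hins ▸ hmem (insert i s))
    rw [← Real.norm_eq_abs] at hstep
    rw [hins, Finset.sum_insert hi, Finset.sum_insert hi, mul_add]
    calc _ = ‖(g (y + h i • EuclideanSpace.single i 1) - g y - h i • p i x₀)
            + (g y - g x₀ - ∑ j ∈ s, h j • p j x₀)‖ := by congr 1; abel
      _ ≤ _ := (norm_add_le _ _).trans (add_le_add hstep ih)

theorem hasFDerivAt_of_hasLineDerivAt_single {g : EuclideanSpace ℝ ι → F}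
    {p : ι → EuclideanSpace ℝ ι → F} {x₀ : EuclideanSpace ℝ ι}
    (hp : ∀ᶠ x in 𝓝 x₀, ∀ i, HasLineDerivAt ℝ g (p i x) x (EuclideanSpace.single i 1))
    (hpc : ∀ i, ContinuousAt (p i) x₀) :
    HasFDerivAt g (∑ i, (EuclideanSpace.proj (𝕜 := ℝ) i).smulRight (p i x₀)) x₀ := by
  rw [hasFDerivAt_iff_isLittleO_nhds_zero, Asymptotics.isLittleO_iff]
  intro c hc
  set N : ℝ := (Fintype.card ι : ℝ)
  set ε := c / (N + 1)
  have hε : 0 < ε := by positivity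
  obtain ⟨δ, hδ, hball⟩ := Metric.eventually_nhds_iff_ball.mp <| hp.and <|
    eventually_all.2 fun i => (hpc i).eventually (closedBall_mem_nhds (p i x₀) hε)
  filter_upwards [ball_mem_nhds (0 : EuclideanSpace ℝ ι) (by positivity : 0 < δ / (N + 1))]
    with h hh
  rw [mem_ball_zero_iff, lt_div_iff₀ (by positivity)] at hh
  have hmem : ∀ s : Finset ι, x₀ + ∑ i ∈ s, h i • EuclideanSpace.single i (1 : ℝ) ∈ ball x₀ δ :=
    fun s => by
      rw [mem_ball_iff_norm, add_sub_cancel_left]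
      nlinarith [EuclideanSpace.norm_sum_smul_single_le h s, norm_nonneg h]
  calc ‖g (x₀ + h) - g x₀ - (∑ i, (EuclideanSpace.proj (𝕜 := ℝ) i).smulRight (p i x₀)) h‖
      = ‖g (x₀ + ∑ i, h i • EuclideanSpace.single i (1 : ℝ)) - g x₀ - ∑ i, h i • p i x₀‖ := by
        simp [EuclideanSpace.sum_smul_single]
    _ ≤ ε * ∑ i, ‖h i‖ := (convex_ball x₀ δ).norm_sub_sub_sum_le_of_hasLineDerivAt_single
        (fun z hz => (hball z hz).1) (fun z hz i => mem_closedBall_iff_norm.1 ((hball z hz).2 i))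
        hmem Finset.univ
    _ ≤ ε * (N * ‖h‖) := by gcongr; exact EuclideanSpace.sum_norm_apply_le h
    _ ≤ c * ‖h‖ := by
        rw [← mul_assoc]
        gcongr
        rw [div_mul_eq_mul_div, div_le_iff₀ (by positivity)]
        nlinarith

theorem exists_hasFDerivAt_sum_smulRight {p : ι → EuclideanSpace ℝ ι → ℝ}
    {q : ι → ι → EuclideanSpace ℝ ι → ℝ} {x₀ : EuclideanSpace ℝ ι}
    (hq : ∀ᶠ x in 𝓝 x₀, ∀ i j, HasLineDerivAt ℝ (p i) (q i j x) x (EuclideanSpace.single j 1))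
    (hqc : ∀ i j, ContinuousAt (q i j) x₀) :
    ∃ D₂ : EuclideanSpace ℝ ι →L[ℝ] EuclideanSpace ℝ ι →L[ℝ] ℝ,
      HasFDerivAt (fun z => ∑ i, (EuclideanSpace.proj (𝕜 := ℝ) i).smulRight (p i z)) D₂ x₀ ∧
      ∀ v w, D₂ v w = ∑ i, w i * ∑ j, v j * q i j x₀ := by
  refine ⟨_, HasFDerivAt.fun_sum fun i _ =>
    (ContinuousLinearMap.smulRightL ℝ _ ℝ (EuclideanSpace.proj i)).hasFDerivAt.comp x₀
      (hasFDerivAt_of_hasLineDerivAt_single (hq.mono fun x hx j => hx i j) (hqc i)),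
    fun v w => ?_⟩
  simp [Finset.mul_sum]

section Hessian

variable {G : EuclideanSpace ℝ ι → ℝ} {p : ι → EuclideanSpace ℝ ι → ℝ}
  {q : ι → ι → EuclideanSpace ℝ ι → ℝ} {x₀ : EuclideanSpace ℝ ι}

theorem eventually_hasFDerivAt_of_hasLineDerivAt_single
    (hp : ∀ᶠ x in 𝓝 x₀, ∀ i, HasLineDerivAt ℝ G (p i x) x (EuclideanSpace.single i 1))
    (hpc : ∀ᶠ x in 𝓝 x₀, ∀ i, ContinuousAt (p i) x) :
    ∀ᶠ z in 𝓝 x₀, HasFDerivAt G (∑ i, (EuclideanSpace.proj (𝕜 := ℝ) i).smulRight (p i z)) z := by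
  filter_upwards [hp.eventually_nhds, hpc] with z hz hzc
  exact hasFDerivAt_of_hasLineDerivAt_single hz hzc

theorem hessian_symm_of_hasLineDerivAt_single
    (hp : ∀ᶠ x in 𝓝 x₀, ∀ i, HasLineDerivAt ℝ G (p i x) x (EuclideanSpace.single i 1))
    (hpc : ∀ᶠ x in 𝓝 x₀, ∀ i, ContinuousAt (p i) x)
    (hq : ∀ᶠ x in 𝓝 x₀, ∀ i j, HasLineDerivAt ℝ (p i) (q i j x) x (EuclideanSpace.single j 1))
    (hqc : ∀ i j, ContinuousAt (q i j) x₀) (i j : ι) :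
    q i j x₀ = q j i x₀ := by
  obtain ⟨D₂, hD₂, hD₂_apply⟩ := exists_hasFDerivAt_sum_smulRight hq hqc
  simpa [hD₂_apply, PiLp.single_apply] using second_derivative_symmetric_of_eventually
    (eventually_hasFDerivAt_of_hasLineDerivAt_single hp hpc) hD₂
    (EuclideanSpace.single j 1) (EuclideanSpace.single i 1)

theorem IsLocalMax.hessian_nonpos_of_hasLineDerivAt_single (hmax : IsLocalMax G x₀)
    (hp : ∀ᶠ x in 𝓝 x₀, ∀ i, HasLineDerivAt ℝ G (p i x) x (EuclideanSpace.single i 1))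
    (hpc : ∀ᶠ x in 𝓝 x₀, ∀ i, ContinuousAt (p i) x)
    (hq : ∀ᶠ x in 𝓝 x₀, ∀ i j, HasLineDerivAt ℝ (p i) (q i j x) x (EuclideanSpace.single j 1))
    (hqc : ∀ i j, ContinuousAt (q i j) x₀) (ξ : EuclideanSpace ℝ ι) :
    ∑ i, ∑ j, q i j x₀ * ξ i * ξ j ≤ 0 := by
  obtain ⟨D₂, hD₂, hD₂_apply⟩ := exists_hasFDerivAt_sum_smulRight hq hqc
  convert hmax.hessian_nonpos (eventually_hasFDerivAt_of_hasLineDerivAt_single hp hpc) hD₂ ξ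
    using 1
  simp only [hD₂_apply, Finset.mul_sum]
  exact Finset.sum_congr rfl fun i _ => Finset.sum_congr rfl fun j _ => by ring

theorem IsLocalMax.sum_mul_hessian_nonpos {A : ι → ι → ℝ}
    (hA : ∀ ξ : EuclideanSpace ℝ ι, 0 ≤ ∑ i, ∑ j, A i j * ξ i * ξ j) (hmax : IsLocalMax G x₀)
    (hp : ∀ᶠ x in 𝓝 x₀, ∀ i, HasLineDerivAt ℝ G (p i x) x (EuclideanSpace.single i 1))
    (hpc : ∀ᶠ x in 𝓝 x₀, ∀ i, ContinuousAt (p i) x)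
    (hq : ∀ᶠ x in 𝓝 x₀, ∀ i j, HasLineDerivAt ℝ (p i) (q i j x) x (EuclideanSpace.single j 1))
    (hqc : ∀ i j, ContinuousAt (q i j) x₀) :
    ∑ i, ∑ j, A i j * q i j x₀ ≤ 0 :=
  sum_mul_nonpos_of_quadForm_nonpos (fun ξ => hA (WithLp.toLp 2 ξ))
    (fun ξ => hmax.hessian_nonpos_of_hasLineDerivAt_single hp hpc hq hqc (WithLp.toLp 2 ξ))
    (hessian_symm_of_hasLineDerivAt_single hp hpc hq hqc)

end Hessian

end

theorem union_upperLid_subset_closure {n : ℕ} (ω : Set (Eucl n × ℝ)) :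
    ω ∪ upperLid ω ⊆ closure ω := by
  refine union_subset subset_closure ?_
  rintro q ⟨r, hr, ε, hε, hcyl, -⟩
  refine closure_mono hcyl ?_
  rw [closure_prod_eq, closure_Ioo (by linarith : q.2 - ε ≠ q.2)]
  exact ⟨subset_closure (mem_ball_self hr), by linarith, le_rfl⟩

theorem exists_cylinder_of_mem_union_upperLid {n : ℕ} {ω : Set (Eucl n × ℝ)} (hω : IsOpen ω)
    {q : Eucl n × ℝ} (hq : q ∈ ω ∪ upperLid ω) :
    ∃ r > 0, ∃ ε > 0, ball q.1 r ×ˢ Ioo (q.2 - ε) q.2 ⊆ ω ∧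
      ∀ x ∈ ball q.1 r, (x, q.2) ∈ ω ∪ upperLid ω := by
  rcases hq with hq | ⟨r, hr, ε, hε, hcyl, hempty⟩
  · obtain ⟨r, hr, hball⟩ := Metric.isOpen_iff.mp hω q hq
    have hsub : ∀ x ∈ ball q.1 r, ∀ τ ∈ Ioc (q.2 - r) q.2, (x, τ) ∈ ω := fun x hx τ hτ =>
      hball <| by
        rw [← ball_prod_same, Real.ball_eq_Ioo]
        exact ⟨hx, hτ.1, by linarith [hτ.2]⟩
    exact ⟨r, hr, r, hr, fun z hz => hsub z.1 hz.1 z.2 (Ioo_subset_Ioc_self hz.2),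
      fun x hx => Or.inl (hsub x hx q.2 ⟨by linarith, le_rfl⟩)⟩
  · refine ⟨r, hr, ε, hε, hcyl, fun x hx => Or.inr ?_⟩
    have hsub : ball x (r - dist x q.1) ⊆ ball q.1 r := ball_subset_ball' (by linarith)
    refine ⟨r - dist x q.1, by linarith [mem_ball.mp hx], ε, hε,
      fun z hz => hcyl ⟨hsub hz.1, hz.2⟩, subset_empty_iff.mp fun z hz => ?_⟩
    exact hempty.subset ⟨⟨hsub hz.1.1, hz.1.2⟩, hz.2⟩

theorem nonpos_on_closure_of_not_isMaxOn {n : ℕ} {ω : Set (Eucl n × ℝ)} (hω : IsOpen ω)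
    (hω_bdd : Bornology.IsBounded ω) {h : Eucl n × ℝ → ℝ} (hh : ContinuousOn h (closure ω))
    (hbdry : ∀ q ∈ properBoundary ω, h q ≤ 0)
    (hnomax : ∀ σ > 0, ∀ p ∈ ω ∪ upperLid ω,
      ¬ IsMaxOn (fun q => h q - σ * q.2) (closure ω) p) :
    ∀ q ∈ closure ω, h q ≤ 0 := by
  intro q hq
  obtain ⟨C, hC⟩ := hω_bdd.closure.exists_norm_le
  have hC₀ : 0 ≤ C := (norm_nonneg q).trans (hC q hq)
  have hσ : ∀ σ > 0, h q ≤ σ * (2 * C) := by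
    intro σ hσ
    obtain ⟨p, hp, hpmax⟩ := hω_bdd.isCompact_closure.exists_isMaxOn ⟨q, hq⟩
      (hh.sub (continuous_const.mul continuous_snd).continuousOn)
    have hpΓ : p ∈ properBoundary ω := by
      refine ⟨⟨hp, fun hpω => hnomax σ hσ p (Or.inl ?_) hpmax⟩,
        fun hpγ => hnomax σ hσ p (Or.inr hpγ) hpmax⟩
      rwa [hω.interior_eq] at hpω
    have hqp : h q - σ * q.2 ≤ h p - σ * p.2 := hpmax hq
    have hq2 : |q.2| ≤ C := (norm_snd_le q).trans (hC q hq)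
    have hp2 : |p.2| ≤ C := (norm_snd_le p).trans (hC p hp)
    nlinarith [hbdry p hpΓ, abs_le.mp hq2, abs_le.mp hp2]
  refine le_of_forall_pos_lt_add fun ε hε => ?_
  calc h q ≤ ε / (2 * C + 1) * (2 * C) := hσ _ (by positivity)
    _ < 0 + ε := by
      rw [zero_add, div_mul_eq_mul_div, div_lt_iff₀ (by positivity)]
      nlinarith

theorem not_isMaxOn_sub_mul_snd {n : ℕ} {ω : Set (Eucl n × ℝ)} (hω : IsOpen ω)
    {A : Eucl n × ℝ → Fin n → Fin n → ℝ}
    (hA : ∀ q ∈ ω ∪ upperLid ω, ∀ ξ : Eucl n, 0 ≤ ∑ i, ∑ j, A q i j * ξ i * ξ j)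
    {W : Eucl n → ℝ → ℝ} {dW : Eucl n → ℝ → Eucl n} {d2W : Eucl n → ℝ → Fin n → Fin n → ℝ}
    {Wt : Eucl n → ℝ → ℝ}
    (hdW : ∀ q ∈ ω ∪ upperLid ω, ∀ i, HasDerivAt
      (fun s : ℝ => W (q.1 + s • EuclideanSpace.single i (1 : ℝ)) q.2) (dW q.1 q.2 i) 0)
    (hd2W : ∀ q ∈ ω ∪ upperLid ω, ∀ i j, HasDerivAt
      (fun s : ℝ => dW (q.1 + s • EuclideanSpace.single j (1 : ℝ)) q.2 i) (d2W q.1 q.2 i j) 0)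
    (hWt : ∀ q ∈ ω ∪ upperLid ω, HasDerivAt (fun τ : ℝ => W q.1 τ) (Wt q.1 q.2) q.2)
    (hdW_cont : ∀ i, ContinuousOn (fun q : Eucl n × ℝ => dW q.1 q.2 i) (ω ∪ upperLid ω))
    (hd2W_cont : ∀ i j, ContinuousOn (fun q : Eucl n × ℝ => d2W q.1 q.2 i j) (ω ∪ upperLid ω))
    (hineq : ∀ q ∈ ω ∪ upperLid ω, dW q.1 q.2 = 0 →
      Wt q.1 q.2 ≤ ∑ i, ∑ j, A q i j * d2W q.1 q.2 i j)
    {σ : ℝ} (hσ : 0 < σ) {p : Eucl n × ℝ} (hp : p ∈ ω ∪ upperLid ω) :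
    ¬ IsMaxOn (fun q : Eucl n × ℝ => W q.1 q.2 - σ * q.2) (closure ω) p := by
  intro hmax
  obtain ⟨r, hr, ε, hε, hcyl, hslice⟩ := exists_cylinder_of_mem_union_upperLid hω hp
  have hsliceC : ContinuousOn (fun x : Eucl n => (x, p.2)) (ball p.1 r) :=
    (continuous_id.prodMk continuous_const).continuousOn
  have hslice' : ∀ᶠ x in 𝓝 p.1, (x, p.2) ∈ ω ∪ upperLid ω :=
    eventually_of_mem (ball_mem_nhds p.1 hr) hslice
  have hloc : IsLocalMax (fun x => W x p.2) p.1 := by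
    filter_upwards [hslice'] with x hx
    simpa using hmax (union_upperLid_subset_closure ω hx)
  have hp' : ∀ᶠ x in 𝓝 p.1, ∀ i,
      HasLineDerivAt ℝ (fun x => W x p.2) (dW x p.2 i) x (EuclideanSpace.single i 1) :=
    hslice'.mono fun x hx i => hdW _ hx i
  have hpc : ∀ᶠ x in 𝓝 p.1, ∀ i, ContinuousAt (fun x => dW x p.2 i) x :=
    eventually_of_mem (ball_mem_nhds p.1 hr) fun x hx i =>
      ((hdW_cont i).comp hsliceC hslice).continuousAt (isOpen_ball.mem_nhds hx)
  have hq' : ∀ᶠ x in 𝓝 p.1, ∀ i j, HasLineDerivAt ℝ (fun x => dW x p.2 i) (d2W x p.2 i j) x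
      (EuclideanSpace.single j 1) :=
    hslice'.mono fun x hx i j => hd2W _ hx i j
  have hqc : ∀ i j, ContinuousAt (fun x => d2W x p.2 i j) p.1 := fun i j =>
    ((hd2W_cont i j).comp hsliceC hslice).continuousAt (ball_mem_nhds p.1 hr)
  have hspace : ∑ i, ∑ j, A p i j * d2W p.1 p.2 i j ≤ 0 :=
    hloc.sum_mul_hessian_nonpos (hA p hp) hp' hpc hq' hqc
  have hgrad : dW p.1 p.2 = 0 := PiLp.ext fun i => hloc.hasLineDerivAt_eq_zero (hdW p hp i)
  have htime : 0 ≤ Wt p.1 p.2 - σ := by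
    refine IsLocalMaxOn.nonneg_of_hasDerivAt_Iic ?_ ((hWt p hp).sub (hasDerivAt_mul_const σ))
    have hleft : Ioc (p.2 - ε) p.2 ∈ 𝓝[≤] p.2 := Ioc_mem_nhdsLE (by linarith)
    filter_upwards [hleft] with τ hτ
    rcases hτ.2.eq_or_lt with rfl | hlt
    · exact le_rfl
    · have hτω : (p.1, τ) ∈ ω := hcyl ⟨mem_ball_self hr, hτ.1, hlt⟩
      have : W p.1 τ - σ * τ ≤ W p.1 p.2 - σ * p.2 := hmax (subset_closure hτω)
      show W p.1 τ - τ * σ ≤ W p.1 p.2 - p.2 * σ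
      linarith
  have := hineq p hp hgrad
  linarith

theorem comparison_principle_general
    (n : ℕ)
    (a : Eucl n → ℝ → Fin n → Fin n → ℝ)
    (f : Eucl n → ℝ → Eucl n → ℝ)
    (hell : ∀ (x : Eucl n) (ζ : ℝ), ζ ≠ 0 → ∀ ξ : Eucl n, ξ ≠ 0 →
      0 < ∑ i, ∑ j, a x ζ i j * ξ i * ξ j)
    (u : Eucl n → ℝ → ℝ)
    (ω : Set (Eucl n × ℝ))
    (hω_open : IsOpen ω) (hω_bdd : Bornology.IsBounded ω)
    (hu_pos : ∀ q ∈ ω ∪ upperLid ω, 0 < u q.1 q.2)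
    -- `v` and its derivatives
    (v : Eucl n → ℝ → ℝ) (dv : Eucl n → ℝ → Eucl n)
    (d2v : Eucl n → ℝ → Fin n → Fin n → ℝ) (vt : Eucl n → ℝ → ℝ)
    (hv_cont : ContinuousOn (fun q : Eucl n × ℝ => v q.1 q.2) (closure ω))
    (hdv : ∀ q ∈ ω ∪ upperLid ω, ∀ i, HasDerivAt
      (fun s : ℝ => v (q.1 + s • EuclideanSpace.single i (1 : ℝ)) q.2) (dv q.1 q.2 i) 0)
    (hd2v : ∀ q ∈ ω ∪ upperLid ω, ∀ i j, HasDerivAt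
      (fun s : ℝ => dv (q.1 + s • EuclideanSpace.single j (1 : ℝ)) q.2 i) (d2v q.1 q.2 i j) 0)
    (hvt : ∀ q ∈ ω ∪ upperLid ω, HasDerivAt (fun τ : ℝ => v q.1 τ) (vt q.1 q.2) q.2)
    (hdv_cont : ∀ i, ContinuousOn (fun q : Eucl n × ℝ => dv q.1 q.2 i) (ω ∪ upperLid ω))
    (hd2v_cont : ∀ i j, ContinuousOn (fun q : Eucl n × ℝ => d2v q.1 q.2 i j) (ω ∪ upperLid ω))
    -- `w` and its derivatives
    (w : Eucl n → ℝ → ℝ) (dw : Eucl n → ℝ → Eucl n)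
    (d2w : Eucl n → ℝ → Fin n → Fin n → ℝ) (wt : Eucl n → ℝ → ℝ)
    (hw_cont : ContinuousOn (fun q : Eucl n × ℝ => w q.1 q.2) (closure ω))
    (hdw : ∀ q ∈ ω ∪ upperLid ω, ∀ i, HasDerivAt
      (fun s : ℝ => w (q.1 + s • EuclideanSpace.single i (1 : ℝ)) q.2) (dw q.1 q.2 i) 0)
    (hd2w : ∀ q ∈ ω ∪ upperLid ω, ∀ i j, HasDerivAt
      (fun s : ℝ => dw (q.1 + s • EuclideanSpace.single j (1 : ℝ)) q.2 i) (d2w q.1 q.2 i j) 0)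
    (hwt : ∀ q ∈ ω ∪ upperLid ω, HasDerivAt (fun τ : ℝ => w q.1 τ) (wt q.1 q.2) q.2)
    (hdw_cont : ∀ i, ContinuousOn (fun q : Eucl n × ℝ => dw q.1 q.2 i) (ω ∪ upperLid ω))
    (hd2w_cont : ∀ i j, ContinuousOn (fun q : Eucl n × ℝ => d2w q.1 q.2 i j) (ω ∪ upperLid ω))
    -- the differential inequality `Lv − v_t − f(x,u,Dv) ≥ Lw − w_t − f(x,u,Dw)` on `ω ∪ γ(ω)`
    (hmain : ∀ q ∈ ω ∪ upperLid ω,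
      (∑ i, ∑ j, a q.1 (u q.1 q.2) i j * d2w q.1 q.2 i j) - wt q.1 q.2
          - f q.1 (u q.1 q.2) (dw q.1 q.2)
        ≤ (∑ i, ∑ j, a q.1 (u q.1 q.2) i j * d2v q.1 q.2 i j) - vt q.1 q.2
          - f q.1 (u q.1 q.2) (dv q.1 q.2))
    -- the boundary inequality `v ≤ w` on `Γ(ω)`
    (hbdry : ∀ q ∈ properBoundary ω, v q.1 q.2 ≤ w q.1 q.2) :
    ∀ q ∈ ω ∪ upperLid ω, v q.1 q.2 ≤ w q.1 q.2 := by
  refine fun q hq => sub_nonpos.mp <| nonpos_on_closure_of_not_isMaxOn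
    (h := fun q => v q.1 q.2 - w q.1 q.2) hω_open hω_bdd (hv_cont.sub hw_cont)
    (fun q hq => sub_nonpos.mpr (hbdry q hq))
    (fun σ hσ p hp => ?_) q (union_upperLid_subset_closure ω hq)
  refine not_isMaxOn_sub_mul_snd hω_open (A := fun q => a q.1 (u q.1 q.2))
    (W := fun x t => v x t - w x t) (dW := fun x t => dv x t - dw x t)
    (d2W := fun x t i j => d2v x t i j - d2w x t i j) (Wt := fun x t => vt x t - wt x t)
    (fun q hq ξ => (eq_or_ne ξ 0).elim (fun hξ => by simp [hξ])
      fun hξ => (hell q.1 _ (hu_pos q hq).ne' ξ hξ).le)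
    (fun q hq i => (hdv q hq i).sub (hdw q hq i))
    (fun q hq i j => (hd2v q hq i j).sub (hd2w q hq i j))
    (fun q hq => (hvt q hq).sub (hwt q hq))
    (fun i => (hdv_cont i).sub (hdw_cont i)) (fun i j => (hd2v_cont i j).sub (hd2w_cont i j))
    (fun q hq hgrad => ?_) hσ hp
  have hmain_q := hmain q hq
  rw [sub_eq_zero.mp hgrad] at hmain_q
  simp only [mul_sub, Finset.sum_sub_distrib]
  linarith

/-- **Lemma 3.1** (comparison principle). If `Lv − v_t − f(x,u,Dv) ≥ Lw − w_t − f(x,u,Dw)`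
on `ω ∪ γ(ω)` and `v ≤ w` on `Γ(ω)`, where `ω ≠ ∅` is a bounded open subset of
`ℝⁿ × (0,∞)` on which the continuous function `u` is positive, then `v ≤ w` on `ω ∪ γ(ω)`. -/
theorem comparison_principle
    (n : ℕ) (hn : 1 ≤ n)
    (a : Eucl n → ℝ → Fin n → Fin n → ℝ)
    (f : Eucl n → ℝ → Eucl n → ℝ)
    (hell : ∀ (x : Eucl n) (ζ : ℝ), ζ ≠ 0 → ∀ ξ : Eucl n, ξ ≠ 0 →
      0 < ∑ i, ∑ j, a x ζ i j * ξ i * ξ j)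
    (u : Eucl n → ℝ → ℝ)
    (hu_cont : ContinuousOn (fun q : Eucl n × ℝ => u q.1 q.2) (univ ×ˢ Ioi 0))
    (ω : Set (Eucl n × ℝ))
    (hω_ne : ω.Nonempty) (hω_open : IsOpen ω) (hω_bdd : Bornology.IsBounded ω)
    (hω_sub : ∀ q ∈ ω, (0 : ℝ) < q.2)
    (hu_pos : ∀ q ∈ ω ∪ upperLid ω, 0 < u q.1 q.2)
    -- `v` and its derivatives
    (v : Eucl n → ℝ → ℝ) (dv : Eucl n → ℝ → Eucl n)
    (d2v : Eucl n → ℝ → Fin n → Fin n → ℝ) (vt : Eucl n → ℝ → ℝ)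
    (hv_cont : ContinuousOn (fun q : Eucl n × ℝ => v q.1 q.2) (closure ω))
    (hdv : ∀ q ∈ ω ∪ upperLid ω, ∀ i, HasDerivAt
      (fun s : ℝ => v (q.1 + s • EuclideanSpace.single i (1 : ℝ)) q.2) (dv q.1 q.2 i) 0)
    (hd2v : ∀ q ∈ ω ∪ upperLid ω, ∀ i j, HasDerivAt
      (fun s : ℝ => dv (q.1 + s • EuclideanSpace.single j (1 : ℝ)) q.2 i) (d2v q.1 q.2 i j) 0)
    (hvt : ∀ q ∈ ω ∪ upperLid ω, HasDerivAt (fun τ : ℝ => v q.1 τ) (vt q.1 q.2) q.2)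
    (hdv_cont : ∀ i, ContinuousOn (fun q : Eucl n × ℝ => dv q.1 q.2 i) (ω ∪ upperLid ω))
    (hd2v_cont : ∀ i j, ContinuousOn (fun q : Eucl n × ℝ => d2v q.1 q.2 i j) (ω ∪ upperLid ω))
    (hvt_cont : ContinuousOn (fun q : Eucl n × ℝ => vt q.1 q.2) (ω ∪ upperLid ω))
    -- `w` and its derivatives
    (w : Eucl n → ℝ → ℝ) (dw : Eucl n → ℝ → Eucl n)
    (d2w : Eucl n → ℝ → Fin n → Fin n → ℝ) (wt : Eucl n → ℝ → ℝ)
    (hw_cont : ContinuousOn (fun q : Eucl n × ℝ => w q.1 q.2) (closure ω))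
    (hdw : ∀ q ∈ ω ∪ upperLid ω, ∀ i, HasDerivAt
      (fun s : ℝ => w (q.1 + s • EuclideanSpace.single i (1 : ℝ)) q.2) (dw q.1 q.2 i) 0)
    (hd2w : ∀ q ∈ ω ∪ upperLid ω, ∀ i j, HasDerivAt
      (fun s : ℝ => dw (q.1 + s • EuclideanSpace.single j (1 : ℝ)) q.2 i) (d2w q.1 q.2 i j) 0)
    (hwt : ∀ q ∈ ω ∪ upperLid ω, HasDerivAt (fun τ : ℝ => w q.1 τ) (wt q.1 q.2) q.2)
    (hdw_cont : ∀ i, ContinuousOn (fun q : Eucl n × ℝ => dw q.1 q.2 i) (ω ∪ upperLid ω))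
    (hd2w_cont : ∀ i j, ContinuousOn (fun q : Eucl n × ℝ => d2w q.1 q.2 i j) (ω ∪ upperLid ω))
    (hwt_cont : ContinuousOn (fun q : Eucl n × ℝ => wt q.1 q.2) (ω ∪ upperLid ω))
    -- the differential inequality `Lv − v_t − f(x,u,Dv) ≥ Lw − w_t − f(x,u,Dw)` on `ω ∪ γ(ω)`
    (hmain : ∀ q ∈ ω ∪ upperLid ω,
      (∑ i, ∑ j, a q.1 (u q.1 q.2) i j * d2w q.1 q.2 i j) - wt q.1 q.2
          - f q.1 (u q.1 q.2) (dw q.1 q.2)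
        ≤ (∑ i, ∑ j, a q.1 (u q.1 q.2) i j * d2v q.1 q.2 i j) - vt q.1 q.2
          - f q.1 (u q.1 q.2) (dv q.1 q.2))
    -- the boundary inequality `v ≤ w` on `Γ(ω)`
    (hbdry : ∀ q ∈ properBoundary ω, v q.1 q.2 ≤ w q.1 q.2) :
    ∀ q ∈ ω ∪ upperLid ω, v q.1 q.2 ≤ w q.1 q.2 :=
  comparison_principle_general n a f hell u ω hω_open hω_bdd hu_pos v dv d2v vt hv_cont hdv hd2v hvt
    hdv_cont hd2v_cont w dw d2w wt hw_cont hdw hd2w hwt hdw_cont hd2w_cont hmain hbdry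
end
end

section
/- Let 0 < α ≤ 1, σ > 1, ν > 1, M₁ > 0, and M₂ > 0 be real numbers with M₂ ≥ ν M₁. Then there exists a constant A > 0, depending only on α, ν, and σ, such that ( ∫_{M₁}^{M₂} ψ_σ(s)^{−α} s^{α−1} ds )^{1/α} ≥ A ∫_{M₁}^{M₂} ds / ψ(s) for every measurable function ψ : (0,∞) → (0,∞) such that ψ_σ(s) > 0 for all s ∈ (0,∞). -/
/-
Cut `[M₁, M₂]` into `N` pieces `[rᵏM₁, rᵏ⁺¹M₁]` of a common ratio `r ∈ [min ν √σ, σ)`. As `r < σ`,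
the window `(s/σ, σs)` of any `s` in a piece `[a, ra]` contains the whole piece, so
`∫ 1/ψ ≤ (r - 1) a / ψ_σ(s)` over it. Raising this to the power `-α` and integrating against
`s^(α-1)` bounds the weighted integral over the piece below by `c(r) (∫ 1/ψ)^α`, with
`c(r) = (r^α - 1) / (α (r - 1)^α) ≥ (ρ^α - 1) / (α (σ - 1)^α)`, `ρ = min ν √σ`. Since `x ↦ x^α` is
subadditive for `α ≤ 1`, the pieces add up.
-/

open Set MeasureTheory

/-- The paper's `ψ_σ`. -/
noncomputable def windowInf (ψ : ℝ → ℝ) (σ s : ℝ) : ℝ := sInf (ψ '' Ioo (s / σ) (σ * s))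

section Window

variable {σ s ζ : ℝ}

lemma mem_window_comm (hσ : 0 < σ) :
    ζ ∈ Ioo (s / σ) (σ * s) ↔ s ∈ Ioo (ζ / σ) (σ * ζ) := by
  simp only [mem_Ioo, div_lt_iff₀ hσ]
  constructor <;> rintro ⟨h₁, h₂⟩ <;> constructor <;> linarith

lemma pos_of_mem_window (hσ : 1 < σ) (hζ : ζ ∈ Ioo (s / σ) (σ * s)) : 0 < ζ := by
  obtain ⟨h₁, h₂⟩ := hζ
  rw [div_lt_iff₀ (by linarith)] at h₁
  by_contra! hζ
  nlinarith [mul_nonpos_of_nonneg_of_nonpos (sub_nonneg.2 hσ.le) hζ]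

lemma window_eq_empty (hσ : 1 < σ) (hs : s ≤ 0) : Ioo (s / σ) (σ * s) = ∅ :=
  eq_empty_of_forall_notMem fun _ hζ => (pos_of_mem_window hσ hζ).not_ge <| by
    nlinarith [hζ.2]

lemma self_mem_window (hσ : 1 < σ) (hs : 0 < s) : s ∈ Ioo (s / σ) (σ * s) :=
  ⟨div_lt_self hs hσ, lt_mul_left hs hσ⟩

lemma mem_window_of_mem_Icc {a b : ℝ} (hσ : 0 < σ) (hba : b < σ * a) (hs : s ∈ Icc a b)
    (hζ : ζ ∈ Icc a b) : ζ ∈ Ioo (s / σ) (σ * s) := by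
  constructor
  · rw [div_lt_iff₀ hσ]; nlinarith [hs.2, hζ.1]
  · nlinarith [hs.1, hζ.2]

end Window

section WindowInf

variable {ψ : ℝ → ℝ} {σ s ζ : ℝ}

lemma bddBelow_image_window (hσ : 1 < σ) (hψ : ∀ s, 0 < s → 0 < ψ s) :
    BddBelow (ψ '' Ioo (s / σ) (σ * s)) :=
  ⟨0, by rintro _ ⟨ζ, hζ, rfl⟩; exact (hψ ζ (pos_of_mem_window hσ hζ)).le⟩

lemma windowInf_le (hσ : 1 < σ) (hψ : ∀ s, 0 < s → 0 < ψ s) (hζ : ζ ∈ Ioo (s / σ) (σ * s)) :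
    windowInf ψ σ s ≤ ψ ζ :=
  csInf_le (bddBelow_image_window hσ hψ) ⟨ζ, hζ, rfl⟩

lemma windowInf_nonneg (hσ : 1 < σ) (hψ : ∀ s, 0 < s → 0 < ψ s) (s : ℝ) :
    0 ≤ windowInf ψ σ s :=
  Real.sInf_nonneg <| by rintro _ ⟨ζ, hζ, rfl⟩; exact (hψ ζ (pos_of_mem_window hσ hζ)).le

lemma windowInf_of_nonpos (hσ : 1 < σ) (hs : s ≤ 0) : windowInf ψ σ s = 0 := by
  rw [windowInf, window_eq_empty hσ hs, image_empty, Real.sInf_empty]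

-- `ψ_σ s < c` iff the window of `s` meets `{ψ < c}`, iff `s` lies in the window of a point of it;
-- for `s ≤ 0` the window is empty and `ψ_σ s = sInf ∅ = 0`.
lemma windowInf_preimage_Iio (hσ : 1 < σ) (hψ : ∀ s, 0 < s → 0 < ψ s) (c : ℝ) :
    windowInf ψ σ ⁻¹' Iio c =
      (⋃ ζ ∈ {ζ | ψ ζ < c}, Ioo (ζ / σ) (σ * ζ)) ∪ (Iic 0 ∩ {_s | 0 < c}) := by
  ext s
  simp only [mem_preimage, mem_Iio, mem_union, mem_iUnion, mem_ofPred_eq, exists_prop,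
    mem_inter_iff, mem_Iic]
  rcases le_or_gt s 0 with hs | hs
  · have hempty : ∀ ζ, s ∉ Ioo (ζ / σ) (σ * ζ) := fun ζ hsζ =>
      hs.not_gt (pos_of_mem_window hσ hsζ)
    simp [windowInf_of_nonpos hσ hs, hs, hempty]
  · have hne : (ψ '' Ioo (s / σ) (σ * s)).Nonempty := ⟨ψ s, s, self_mem_window hσ hs, rfl⟩
    rw [windowInf, csInf_lt_iff (bddBelow_image_window hσ hψ) hne]
    simp only [mem_image, exists_exists_and_eq_and, mem_window_comm (zero_lt_one.trans hσ),
      hs.not_ge, false_and, or_false]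
    exact exists_congr fun ζ => and_comm

lemma measurable_windowInf (hσ : 1 < σ) (hψ : ∀ s, 0 < s → 0 < ψ s) :
    Measurable (windowInf ψ σ) :=
  measurable_of_Iio fun c => by
    rw [windowInf_preimage_Iio hσ hψ]
    exact (isOpen_biUnion fun _ _ => isOpen_Ioo).measurableSet.union
      (measurableSet_Iic.inter (MeasurableSet.const _))

end WindowInf

section Weight

variable {ψ : ℝ → ℝ} {σ α a b : ℝ}

-- `(s/σ, σs) ⊆ (a/σ, σa) ∪ (b/σ, σb)`, the two windows overlapping because `b < σ²a`.
lemma min_windowInf_le (hσ : 1 < σ) (hψ : ∀ s, 0 < s → 0 < ψ s) (ha : 0 < a)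
    (hb : b < σ ^ 2 * a) {s : ℝ} (hs : s ∈ Icc a b) :
    min (windowInf ψ σ a) (windowInf ψ σ b) ≤ windowInf ψ σ s := by
  have hσ₀ : 0 < σ := by linarith
  refine le_csInf ⟨ψ s, s, self_mem_window hσ (ha.trans_le hs.1), rfl⟩ ?_
  rintro _ ⟨ζ, ⟨hζ₁, hζ₂⟩, rfl⟩
  rcases lt_or_ge ζ (σ * a) with h | h
  · refine (min_le_left _ _).trans (windowInf_le hσ hψ ⟨?_, h⟩)
    exact lt_of_le_of_lt (div_le_div_of_nonneg_right hs.1 hσ₀.le) hζ₁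
  · refine (min_le_right _ _).trans (windowInf_le hσ hψ ⟨?_, ?_⟩)
    · rw [div_lt_iff₀ hσ₀]; nlinarith
    · nlinarith [hs.2]

lemma intervalIntegrable_windowInf_rpow_mul_of_lt (hσ : 1 < σ) (hψ : ∀ s, 0 < s → 0 < ψ s)
    (hψσ : ∀ s, 0 < s → 0 < windowInf ψ σ s) (hα : 0 ≤ α) (hα₁ : α ≤ 1) (ha : 0 < a)
    (hab : a ≤ b) (hb : b < σ ^ 2 * a) :
    IntervalIntegrable (fun s => windowInf ψ σ s ^ (-α) * s ^ (α - 1)) volume a b := by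
  set m := min (windowInf ψ σ a) (windowInf ψ σ b)
  have hm : 0 < m := lt_min (hψσ a ha) (hψσ b (ha.trans_le hab))
  rw [intervalIntegrable_iff_integrableOn_Icc_of_le hab]
  refine Integrable.mono' (g := fun _ => m ^ (-α) * a ^ (α - 1)) (integrable_const _)
    (((measurable_windowInf hσ hψ).pow_const _).mul
      (measurable_id.pow_const _)).aestronglyMeasurable.restrict ?_
  refine (ae_restrict_iff' measurableSet_Icc).2 (ae_of_all _ fun s hs => ?_)
  have hs₀ : 0 < s := ha.trans_le hs.1
  have := windowInf_nonneg hσ hψ (ψ := ψ) s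
  rw [Real.norm_of_nonneg (by positivity)]
  exact mul_le_mul
    (Real.rpow_le_rpow_of_nonpos hm (min_windowInf_le hσ hψ ha hb hs) (by linarith))
    (Real.rpow_le_rpow_of_nonpos ha hs.1 (by linarith)) (by positivity) (by positivity)

lemma intervalIntegrable_windowInf_rpow_mul (hσ : 1 < σ) (hψ : ∀ s, 0 < s → 0 < ψ s)
    (hψσ : ∀ s, 0 < s → 0 < windowInf ψ σ s) (hα : 0 ≤ α) (hα₁ : α ≤ 1) (ha : 0 < a)
    (hab : a ≤ b) :
    IntervalIntegrable (fun s => windowInf ψ σ s ^ (-α) * s ^ (α - 1)) volume a b := by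
  have hgeom : ∀ n : ℕ, IntervalIntegrable (fun s => windowInf ψ σ s ^ (-α) * s ^ (α - 1))
      volume a (σ ^ n * a) := by
    intro n
    induction n with
    | zero => simp
    | succ n ih =>
      have hn : 0 < σ ^ n * a := by positivity
      refine ih.trans ?_
      rw [pow_succ', mul_assoc]
      exact intervalIntegrable_windowInf_rpow_mul_of_lt hσ hψ hψσ hα hα₁ hn
        (le_mul_of_one_le_left hn.le hσ.le) (mul_lt_mul_of_pos_right (by nlinarith) hn)
  obtain ⟨n, hn⟩ := pow_unbounded_of_one_lt (b / a) hσ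
  refine (hgeom n).mono_set (uIcc_subset_uIcc_left ?_)
  rw [div_lt_iff₀ ha] at hn
  exact mem_uIcc_of_le hab hn.le

lemma integral_windowInf_rpow_mul_nonneg (hσ : 1 < σ) (hψ : ∀ s, 0 < s → 0 < ψ s)
    (ha : 0 < a) (hab : a ≤ b) :
    0 ≤ ∫ s in a..b, windowInf ψ σ s ^ (-α) * s ^ (α - 1) :=
  intervalIntegral.integral_nonneg hab fun s hs => by
    have := windowInf_nonneg hσ hψ (ψ := ψ) s
    have : 0 < s := ha.trans_le hs.1
    positivity

lemma integral_inv_nonneg (hψ : ∀ s, 0 < s → 0 < ψ s) (ha : 0 < a) (hab : a ≤ b) :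
    0 ≤ ∫ s in a..b, (ψ s)⁻¹ :=
  intervalIntegral.integral_nonneg hab fun s hs =>
    inv_nonneg.2 (hψ s (ha.trans_le hs.1)).le

end Weight

section Piece

variable {ψ : ℝ → ℝ} {σ α a r : ℝ}

lemma mul_integral_inv_rpow_le (hσ : 1 < σ) (hψ : ∀ s, 0 < s → 0 < ψ s)
    (hψσ : ∀ s, 0 < s → 0 < windowInf ψ σ s) (hα : 0 < α) (hα₁ : α ≤ 1) (ha : 0 < a)
    (hr : 1 < r) (hrσ : r < σ) :
    (r ^ α - 1) / (α * (r - 1) ^ α) * (∫ s in a..r * a, (ψ s)⁻¹) ^ α ≤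
      ∫ s in a..r * a, windowInf ψ σ s ^ (-α) * s ^ (α - 1) := by
  have hab : a < r * a := lt_mul_left ha hr
  have hba : r * a < σ * a := mul_lt_mul_of_pos_right hrσ ha
  have hW := integral_windowInf_rpow_mul_nonneg (α := α) hσ hψ ha hab.le
  by_cases hint : IntervalIntegrable (fun s => (ψ s)⁻¹) volume a (r * a)
  swap
  · rwa [intervalIntegral.integral_undef hint, Real.zero_rpow hα.ne', mul_zero]
  set K := ∫ s in a..r * a, (ψ s)⁻¹
  have hK : 0 ≤ K := integral_inv_nonneg hψ ha hab.le
  have hpoint : ∀ s ∈ Icc a (r * a), (K / ((r - 1) * a)) ^ α ≤ windowInf ψ σ s ^ (-α) := by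
    intro s hs
    have hΦ := hψσ s (ha.trans_le hs.1)
    have hKs : K ≤ (r * a - a) * (windowInf ψ σ s)⁻¹ := by
      calc K ≤ ∫ _ in a..r * a, (windowInf ψ σ s)⁻¹ :=
            intervalIntegral.integral_mono_on hab.le hint intervalIntegrable_const fun ζ hζ =>
              inv_anti₀ hΦ (windowInf_le hσ hψ (mem_window_of_mem_Icc (by linarith) hba hs hζ))
        _ = (r * a - a) * (windowInf ψ σ s)⁻¹ := by simp
    rw [Real.rpow_neg hΦ.le, ← Real.inv_rpow hΦ.le]
    gcongr
    rw [div_le_iff₀' (by nlinarith)]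
    linarith
  calc (r ^ α - 1) / (α * (r - 1) ^ α) * K ^ α
      = (K / ((r - 1) * a)) ^ α * (((r * a) ^ α - a ^ α) / α) := by
        have : 0 < (r - 1) ^ α := Real.rpow_pos_of_pos (by linarith) α
        rw [Real.div_rpow hK (by nlinarith), Real.mul_rpow (by linarith) ha.le,
          Real.mul_rpow (by linarith) ha.le]
        have : 0 < a ^ α := by positivity
        field_simp
    _ = ∫ s in a..r * a, (K / ((r - 1) * a)) ^ α * s ^ (α - 1) := by
        rw [intervalIntegral.integral_const_mul, integral_rpow (Or.inl (by linarith))]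
        simp
    _ ≤ ∫ s in a..r * a, windowInf ψ σ s ^ (-α) * s ^ (α - 1) :=
        intervalIntegral.integral_mono_on hab.le
          ((intervalIntegral.intervalIntegrable_rpow' (by linarith)).const_mul _)
          (intervalIntegrable_windowInf_rpow_mul hσ hψ hψσ hα.le hα₁ ha hab.le)
          fun s hs => mul_le_mul_of_nonneg_right (hpoint s hs)
            (Real.rpow_nonneg (ha.trans_le hs.1).le _)

lemma mul_integral_inv_rpow_le_of_geometric (hσ : 1 < σ)
    (hψ : ∀ s, 0 < s → 0 < ψ s) (hψσ : ∀ s, 0 < s → 0 < windowInf ψ σ s) (hα : 0 < α)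
    (hα₁ : α ≤ 1) (ha : 0 < a) (hr : 1 < r) (hrσ : r < σ) (N : ℕ) :
    (r ^ α - 1) / (α * (r - 1) ^ α) * (∫ s in a..r ^ N * a, (ψ s)⁻¹) ^ α ≤
      ∫ s in a..r ^ N * a, windowInf ψ σ s ^ (-α) * s ^ (α - 1) := by
  induction N with
  | zero => simp [Real.zero_rpow hα.ne']
  | succ N ih =>
    set c := r ^ N * a
    have hc : 0 < c := by positivity
    have hac : a ≤ c := le_mul_of_one_le_left ha.le (one_le_pow₀ hr.le)
    have hcr : c ≤ r * c := le_mul_of_one_le_left hc.le hr.le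
    rw [pow_succ', mul_assoc]
    by_cases hint : IntervalIntegrable (fun s => (ψ s)⁻¹) volume a (r * c)
    swap
    · rw [intervalIntegral.integral_undef hint, Real.zero_rpow hα.ne', mul_zero]
      exact integral_windowInf_rpow_mul_nonneg hσ hψ ha (hac.trans hcr)
    rw [← intervalIntegral.integral_add_adjacent_intervals
        (hint.mono_set (uIcc_subset_uIcc_left (mem_uIcc_of_le hac hcr)))
        (hint.mono_set (uIcc_subset_uIcc_right (mem_uIcc_of_le hac hcr))),
      ← intervalIntegral.integral_add_adjacent_intervals
        (intervalIntegrable_windowInf_rpow_mul hσ hψ hψσ hα.le hα₁ ha hac)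
        (intervalIntegrable_windowInf_rpow_mul hσ hψ hψσ hα.le hα₁ hc hcr)]
    calc (r ^ α - 1) / (α * (r - 1) ^ α) *
          ((∫ s in a..c, (ψ s)⁻¹) + ∫ s in c..r * c, (ψ s)⁻¹) ^ α
        ≤ (r ^ α - 1) / (α * (r - 1) ^ α) *
          ((∫ s in a..c, (ψ s)⁻¹) ^ α + (∫ s in c..r * c, (ψ s)⁻¹) ^ α) := by
          have : 0 < (r - 1) ^ α := Real.rpow_pos_of_pos (by linarith) α
          have : 1 < r ^ α := Real.one_lt_rpow hr hα
          gcongr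
          exact Real.rpow_add_le_add_rpow (integral_inv_nonneg hψ ha hac)
            (integral_inv_nonneg hψ hc hcr) hα.le hα₁
      _ ≤ _ := by
          rw [mul_add]
          exact add_le_add ih (mul_integral_inv_rpow_le hσ hψ hψσ hα hα₁ hc hr hrσ)

end Piece

-- Take `N` with `σᴺ⁻¹ ≤ R < σᴺ`; then `r = R^(1/N)` is at least `R ≥ ν` if `N = 1`, and at least
-- `σ^((N-1)/N) ≥ √σ` otherwise.
lemma exists_pow_eq_of_le {σ ν R : ℝ} (hσ : 1 < σ) (hν : 1 < ν) (hR : ν ≤ R) :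
    ∃ N : ℕ, ∃ r : ℝ, r ^ N = R ∧ min ν √σ ≤ r ∧ r < σ := by
  obtain ⟨n, hσn, hσn'⟩ := exists_nat_pow_near (hν.le.trans hR) hσ
  set r := R ^ ((n + 1 : ℕ) : ℝ)⁻¹
  have hr : r ^ (n + 1) = R := Real.rpow_inv_natCast_pow (by linarith) n.succ_ne_zero
  have hr₀ : 0 ≤ r := Real.rpow_nonneg (by linarith) _
  refine ⟨n + 1, r, hr, ?_, lt_of_pow_lt_pow_left₀ (n + 1) (by linarith) (hr ▸ hσn')⟩
  rcases n with _ | n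
  · exact (min_le_left _ _).trans (by simpa using (hr ▸ hR : ν ≤ r ^ (0 + 1)))
  · refine (min_le_right _ _).trans (le_of_pow_le_pow_left₀ (n + 1).succ_ne_zero hr₀ ?_)
    calc √σ ^ (n + 1 + 1) ≤ √σ ^ (2 * (n + 1)) :=
          pow_le_pow_right₀ (Real.one_le_sqrt.2 hσ.le) (by omega)
      _ = σ ^ (n + 1) := by rw [pow_mul, Real.sq_sqrt (by linarith)]
      _ ≤ r ^ (n + 1 + 1) := hr ▸ hσn

lemma rpow_one_div_mul_le_of_mul_rpow_le {α C K W : ℝ} (hα : 0 < α) (hC : 0 ≤ C) (hK : 0 ≤ K)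
    (h : C * K ^ α ≤ W) : C ^ (1 / α) * K ≤ W ^ (1 / α) :=
  calc C ^ (1 / α) * K = (C * K ^ α) ^ (1 / α) := by
        rw [Real.mul_rpow hC (Real.rpow_nonneg hK α), ← Real.rpow_mul hK,
          mul_one_div_cancel hα.ne', Real.rpow_one]
    _ ≤ W ^ (1 / α) := Real.rpow_le_rpow (by positivity) h (by positivity)

/-- **Lemma 3.5.** Let `0 < α ≤ 1`, `σ > 1`, `ν > 1`. There is a constant `A > 0`
depending only on `α`, `ν`, `σ` such that for all `M₁, M₂ > 0` with `M₂ ≥ ν M₁` and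
every measurable `ψ : (0,∞) → (0,∞)` with `ψ_σ(s) > 0` for all `s > 0` (where
`ψ_σ(s) = inf_{s/σ < ζ < σs} ψ(ζ)`), one has
`(∫_{M₁}^{M₂} ψ_σ(s)^{−α} s^{α−1} ds)^{1/α} ≥ A ∫_{M₁}^{M₂} ds/ψ(s)`. -/
theorem lemma_3_5
    (α σ ν : ℝ) (hα₀ : 0 < α) (hα₁ : α ≤ 1) (hσ : 1 < σ) (hν : 1 < ν) :
    ∃ A : ℝ, 0 < A ∧
      ∀ M₁ M₂ : ℝ, 0 < M₁ → 0 < M₂ → ν * M₁ ≤ M₂ →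
        ∀ ψ : ℝ → ℝ, Measurable ψ → (∀ s : ℝ, 0 < s → 0 < ψ s) →
          (∀ s : ℝ, 0 < s → 0 < sInf (ψ '' Ioo (s / σ) (σ * s))) →
          A * ∫ s in M₁..M₂, (ψ s)⁻¹ ≤
            (∫ s in M₁..M₂, sInf (ψ '' Ioo (s / σ) (σ * s)) ^ (-α) * s ^ (α - 1))
              ^ (1 / α) := by
  set ρ := min ν √σ
  have hρ : 1 < ρ := lt_min hν (Real.lt_sqrt zero_le_one |>.2 (by simpa using hσ))
  have hσα : 0 < (σ - 1) ^ α := Real.rpow_pos_of_pos (by linarith) α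
  have hρα : 1 < ρ ^ α := Real.one_lt_rpow hρ hα₀
  set C := (ρ ^ α - 1) / (α * (σ - 1) ^ α)
  have hC : 0 < C := div_pos (by linarith) (by positivity)
  refine ⟨C ^ (1 / α), Real.rpow_pos_of_pos hC _, fun M₁ M₂ hM₁ _ hM ψ _ hψ hψσ => ?_⟩
  obtain ⟨N, r, hrN, hρr, hrσ⟩ := exists_pow_eq_of_le hσ hν ((le_div_iff₀ hM₁).2 hM)
  have hr : 1 < r := hρ.trans_le hρr
  obtain rfl : M₂ = r ^ N * M₁ := by rw [hrN, div_mul_cancel₀ _ hM₁.ne']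
  have hK : 0 ≤ ∫ s in M₁..r ^ N * M₁, (ψ s)⁻¹ :=
    integral_inv_nonneg hψ hM₁ (le_mul_of_one_le_left hM₁.le (one_le_pow₀ hr.le))
  have hCr : C ≤ (r ^ α - 1) / (α * (r - 1) ^ α) := by
    have : 0 < (r - 1) ^ α := Real.rpow_pos_of_pos (by linarith) α
    have : ρ ^ α ≤ r ^ α := Real.rpow_le_rpow (by linarith) hρr hα₀.le
    have : (r - 1) ^ α ≤ (σ - 1) ^ α := Real.rpow_le_rpow (by linarith) (by linarith) hα₀.le
    exact div_le_div₀ (by linarith) (by linarith) (by positivity) (by gcongr)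
  refine rpow_one_div_mul_le_of_mul_rpow_le hα₀ hC.le hK ?_
  exact (mul_le_mul_of_nonneg_right hCr (Real.rpow_nonneg hK α)).trans
    (mul_integral_inv_rpow_le_of_geometric hσ hψ hψσ hα₀ hα₁ hM₁ hr hrσ N)
end
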